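/- arXiv:2101.02059 — 8 statements merged into one kernel-verified Lean document; each statement's English description precedes it below -/
import Mathlib

section
/- Let p be a prime and α ≥ 2 an integer, and let G = ℤ/p^αℤ. For two distinct elements a ∈ O_{α,p^i} and b ∈ O_{α,p^j} (where 0 ≤ i, j ≤ α), the vertices a and b are adjacent in the group-annihilator graph Γ(G) if and only if i + j ≥ α. -/
/-- The `a`-annihilator `[a : G] = {x ∈ ℤ : xg ∈ ℤa for all g ∈ G}` of a finite abelian
group `G` viewed as a `ℤ`-module. -/
def annSet {G : Type*} [AddCommGroup G] (a : G) : Set ℤ :=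
  {x : ℤ | ∀ g : G, ∃ n : ℤ, x • g = n • a}

/-- The group-annihilator graph `Γ(G)`: two distinct vertices `a, b` are adjacent iff
`[a : G][b : G]G = {0}`. -/
def annGraph (G : Type*) [AddCommGroup G] : SimpleGraph G where
  Adj a b := a ≠ b ∧ ∀ x ∈ annSet a, ∀ y ∈ annSet b, ∀ g : G, (x * y) • g = 0
  symm := by
    constructor
    rintro a b ⟨hne, h⟩
    refine ⟨hne.symm, fun y hy x hx g => ?_⟩
    rw [mul_comm]
    exact h x hx y hy g
  loopless := by constructor; rintro a ⟨h, -⟩; exact h rfl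

/-- The `p^i`-th orbit `O_{α,p^i} = {p^i b mod p^α : b ∈ ℤ, gcd(b,p) = 1}` of `ℤ/p^αℤ`. -/
def porbit (p α i : ℕ) : Set (ZMod (p ^ α)) :=
  {x : ZMod (p ^ α) | ∃ b : ℤ, Int.gcd b p = 1 ∧ x = (((p : ℤ) ^ i * b : ℤ) : ZMod (p ^ α))}

/-!
For `d ∣ n` and `u` a unit mod `n` one has `[d u : ℤ/nℤ] = dℤ`: multiples of `d` reach all
of `ℤ d u` because `u` is invertible, and conversely `x · 1 ∈ ℤ d u` forces `d ∣ x` as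
`d ∣ n`. Since `ℤ/nℤ` has exponent `n`, the vertices `d u` and `e v` are adjacent exactly
when `n ∣ d e`; for `n = p^α`, `d = p^i`, `e = p^j` this reads `α ≤ i + j`.
-/

namespace ZMod

variable {n : ℕ}

lemma forall_zsmul_eq_zero_iff (k : ℤ) : (∀ g : ZMod n, k • g = 0) ↔ (n : ℤ) ∣ k := by
  simp_rw [zsmul_eq_mul]
  refine ⟨fun h => ?_, fun h g => ?_⟩
  · simpa [ZMod.intCast_zmod_eq_zero_iff_dvd] using h 1
  · rw [(ZMod.intCast_zmod_eq_zero_iff_dvd k n).mpr h, zero_mul]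

lemma mem_annSet_iff {d u : ℤ} (hd : d ∣ n) (hu : IsCoprime u n) (x : ℤ) :
    x ∈ annSet ((d * u : ℤ) : ZMod n) ↔ d ∣ x := by
  constructor
  · intro hx
    obtain ⟨m, hm⟩ := hx 1
    rw [zsmul_eq_mul, zsmul_eq_mul, mul_one, ← Int.cast_mul,
      ZMod.intCast_eq_intCast_iff_dvd_sub] at hm
    have hdx : d ∣ m * (d * u) - x := hd.trans hm
    exact (dvd_sub_right ⟨m * u, by ring⟩).mp hdx
  · rintro ⟨k, rfl⟩ g
    obtain ⟨c, e, hce⟩ := hu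
    have hcu : (c : ZMod n) * u = 1 := by
      simpa using congrArg (fun z : ℤ => (z : ZMod n)) hce
    obtain ⟨t, rfl⟩ := ZMod.intCast_surjective g
    refine ⟨k * t * c, ?_⟩
    simp only [zsmul_eq_mul, Int.cast_mul]
    linear_combination -((d : ZMod n) * k * t) * hcu

lemma annGraph_adj_intCast_mul_iff {d e u v : ℤ} (hd : d ∣ n) (he : e ∣ n)
    (hu : IsCoprime u n) (hv : IsCoprime v n) :
    (annGraph (ZMod n)).Adj ((d * u : ℤ) : ZMod n) ((e * v : ℤ) : ZMod n) ↔
      ((d * u : ℤ) : ZMod n) ≠ ((e * v : ℤ) : ZMod n) ∧ (n : ℤ) ∣ d * e := by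
  simp only [annGraph, mem_annSet_iff hd hu, mem_annSet_iff he hv,
    forall_zsmul_eq_zero_iff]
  refine and_congr_right fun _ => ⟨fun h => h d dvd_rfl e dvd_rfl, ?_⟩
  rintro h x hx y hy
  exact h.trans (mul_dvd_mul hx hy)

end ZMod

lemma isCoprime_natCast_pow_of_gcd_eq_one {p : ℕ} {u : ℤ} (hu : Int.gcd u p = 1) (α : ℕ) :
    IsCoprime u ((p ^ α : ℕ) : ℤ) := by
  rw [Nat.cast_pow]
  exact (Int.isCoprime_iff_gcd_eq_one.mpr hu).pow_right

theorem annGraph_adj_iff_general (p α : ℕ) (hp : p.Prime)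
    (i j : ℕ) (hi : i ≤ α) (hj : j ≤ α) (a b : ZMod (p ^ α))
    (ha : a ∈ porbit p α i) (hb : b ∈ porbit p α j) (hab : a ≠ b) :
    (annGraph (ZMod (p ^ α))).Adj a b ↔ α ≤ i + j := by
  obtain ⟨u, hu, rfl⟩ := ha
  obtain ⟨v, hv, rfl⟩ := hb
  have hpow_dvd {k : ℕ} (hk : k ≤ α) : (p : ℤ) ^ k ∣ ((p ^ α : ℕ) : ℤ) := by
    exact_mod_cast Nat.pow_dvd_pow p hk
  rw [ZMod.annGraph_adj_intCast_mul_iff (hpow_dvd hi) (hpow_dvd hj)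
    (isCoprime_natCast_pow_of_gcd_eq_one hu α) (isCoprime_natCast_pow_of_gcd_eq_one hv α),
    ← pow_add, and_iff_right hab,
    ← Nat.pow_dvd_pow_iff_le_right hp.one_lt]
  exact_mod_cast Iff.rfl

/-- for a prime `p`, `α ≥ 2`, distinct `a ∈ O_{α,p^i}` and `b ∈ O_{α,p^j}`
(`0 ≤ i, j ≤ α`), `a` and `b` are adjacent in `Γ(ℤ/p^αℤ)` iff `i + j ≥ α`. -/
theorem annGraph_adj_iff (p α : ℕ) (hp : p.Prime) (hα : 2 ≤ α)
    (i j : ℕ) (hi : i ≤ α) (hj : j ≤ α) (a b : ZMod (p ^ α))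
    (ha : a ∈ porbit p α i) (hb : b ∈ porbit p α j) (hab : a ≠ b) :
    (annGraph (ZMod (p ^ α))).Adj a b ↔ α ≤ i + j :=
  annGraph_adj_iff_general p α hp i j hi hj a b ha hb hab
end

section
/- Let p be a prime, α ≥ 1 an integer, and ℓ ≥ 2 an integer, and let G = (ℤ/p^αℤ)^ℓ. Then the group-annihilator graph Γ(G) is a complete graph on p^{αℓ} vertices: every two distinct elements of G are adjacent in Γ(G). -/
/-!
If `x ∈ [a : R^ι]` and `i ≠ j`, write `x eᵢ = m a` and `x eⱼ = n a`. Comparing coordinates,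
`x = m aᵢ = n aⱼ` while `m aⱼ = n aᵢ = 0`, so `x² = (m aⱼ)(n aᵢ) = 0` in `R`. For `R = ℤ/nℤ`
this says `n ∣ x²`, and two such integers have `n² ∣ (xy)²`, hence `n ∣ xy`.
-/

theorem intCast_sq_eq_zero_of_mem_annSet {R ι : Type*} [CommRing R] {i j : ι} (hij : i ≠ j)
    {a : ι → R} {x : ℤ} (hx : x ∈ annSet a) : (x : R) ^ 2 = 0 := by
  classical
  obtain ⟨m, hm⟩ := hx (Pi.single i 1)
  obtain ⟨n, hn⟩ := hx (Pi.single j 1)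
  have hmi := congrFun hm i
  have hmj := congrFun hm j
  have hni := congrFun hn i
  have hnj := congrFun hn j
  simp only [Pi.smul_apply, Pi.single_eq_same, Pi.single_eq_of_ne hij,
    Pi.single_eq_of_ne hij.symm, zsmul_eq_mul, mul_one, mul_zero] at hmi hmj hni hnj
  calc (x : R) ^ 2 = (m * a i) * (n * a j) := by rw [sq, ← hmi, ← hnj]
    _ = (m * a j) * (n * a i) := by ring
    _ = 0 := by rw [← hmj, ← hni, zero_mul]

theorem ZMod.intCast_mul_eq_zero_of_sq_eq_zero {n : ℕ} {x y : ℤ}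
    (hx : (x : ZMod n) ^ 2 = 0) (hy : (y : ZMod n) ^ 2 = 0) : ((x * y : ℤ) : ZMod n) = 0 := by
  rw [← Int.cast_pow, ZMod.intCast_zmod_eq_zero_iff_dvd] at hx hy
  rw [ZMod.intCast_zmod_eq_zero_iff_dvd, ← Int.pow_dvd_pow_iff two_ne_zero, mul_pow, sq]
  exact mul_dvd_mul hx hy

theorem annGraph_pi_zmod_eq_top (ι : Type*) [Nontrivial ι] (n : ℕ) :
    annGraph (ι → ZMod n) = ⊤ := by
  obtain ⟨i, j, hij⟩ := exists_pair_ne ι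
  ext a b
  refine ⟨fun hab => hab.1, fun hab => ⟨hab, fun x hx y hy g => ?_⟩⟩
  have hxy := ZMod.intCast_mul_eq_zero_of_sq_eq_zero
    (intCast_sq_eq_zero_of_mem_annSet hij hx) (intCast_sq_eq_zero_of_mem_annSet hij hy)
  funext k
  rw [Pi.smul_apply, zsmul_eq_mul, hxy, zero_mul, Pi.zero_apply]

theorem annGraph_pi_complete_general (p α ℓ : ℕ) (hℓ : 2 ≤ ℓ) :
    Nat.card (Fin ℓ → ZMod (p ^ α)) = p ^ (α * ℓ) ∧
    ∀ a b : Fin ℓ → ZMod (p ^ α), a ≠ b → (annGraph (Fin ℓ → ZMod (p ^ α))).Adj a b := by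
  have : Nontrivial (Fin ℓ) := Fin.nontrivial_iff_two_le.mpr hℓ
  refine ⟨?_, fun a b hab => ?_⟩
  · rw [Nat.card_fun, Nat.card_zmod, Nat.card_fin, pow_mul]
  · rw [annGraph_pi_zmod_eq_top]
    exact hab

/-- for a prime `p`, `α ≥ 1`, `ℓ ≥ 2` and `G = (ℤ/p^αℤ)^ℓ`, the
group-annihilator graph `Γ(G)` is a complete graph on `p^(αℓ)` vertices. -/
theorem annGraph_pi_complete (p α ℓ : ℕ) (hp : p.Prime) (hα : 1 ≤ α) (hℓ : 2 ≤ ℓ) :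
    Nat.card (Fin ℓ → ZMod (p ^ α)) = p ^ (α * ℓ) ∧
    ∀ a b : Fin ℓ → ZMod (p ^ α), a ≠ b → (annGraph (Fin ℓ → ZMod (p ^ α))).Adj a b :=
  annGraph_pi_complete_general p α ℓ hℓ
end

section
/- Let p be a prime and ℓ ≥ 2 an integer, and let G = (ℤ/pℤ)^ℓ. The automorphism group of the group-annihilator graph Γ(G) acts transitively on the vertex set G: for any two vertices u, v ∈ G there is a graph automorphism φ of Γ(G) with φ(u) = v. -/
/-! Multiplication by an integer `x` on an elementary abelian `p`-group `G` is either zero or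
bijective. For `x ∈ [a : G]` it maps `G` into `ℤa`, so if it is bijective then `G = ℤa` is
cyclic. Hence when `G` is not cyclic every annihilator kills `G`, `Γ(G)` is the complete graph,
and every permutation of `G`, in particular the transposition of `u` and `v`, is an
automorphism. -/

theorem not_isAddCyclic_of_two_le_finrank {R G : Type*} [Ring R] [StrongRankCondition R]
    [AddCommGroup G] [Module R G] (h : 2 ≤ Module.finrank R G) : ¬ IsAddCyclic G := by
  rintro ⟨a, ha⟩
  have : Module.finrank R G ≤ 1 := finrank_le_one a fun g => by
    obtain ⟨n, rfl⟩ := ha g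
    exact ⟨n, Int.cast_smul_eq_zsmul R n a⟩
  omega

theorem zsmul_eq_zero_of_mem_annSet (p : ℕ) [Fact p.Prime] {G : Type*} [AddCommGroup G]
    [Module (ZMod p) G] (hG : ¬ IsAddCyclic G) {a : G} {x : ℤ} (hx : x ∈ annSet a) (g : G) :
    x • g = 0 := by
  have hx0 : (x : ZMod p) = 0 := by
    by_contra hne
    refine hG ⟨a, fun g => ?_⟩
    obtain ⟨n, hn⟩ := hx ((x : ZMod p)⁻¹ • g)
    refine ⟨n, (?_ : n • a = g)⟩
    rw [← hn, ← Int.cast_smul_eq_zsmul (ZMod p), smul_smul, mul_inv_cancel₀ hne, one_smul]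
  rw [← Int.cast_smul_eq_zsmul (ZMod p), hx0, zero_smul]

theorem annGraph_eq_top (p : ℕ) [Fact p.Prime] {G : Type*} [AddCommGroup G] [Module (ZMod p) G]
    (hG : ¬ IsAddCyclic G) : annGraph G = ⊤ := by
  ext a b
  refine ⟨fun h => h.1, fun hne => ⟨hne, fun x hx y _ g => ?_⟩⟩
  rw [mul_comm, mul_zsmul, zsmul_eq_zero_of_mem_annSet p hG hx, zsmul_zero]

/-- for a prime `p` and `ℓ ≥ 2`, the automorphism group of
`Γ((ℤ/pℤ)^ℓ)` acts transitively on the vertices. -/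
theorem annGraph_aut_transitive (p ℓ : ℕ) (hp : p.Prime) (hℓ : 2 ≤ ℓ)
    (u v : Fin ℓ → ZMod p) :
    ∃ φ : annGraph (Fin ℓ → ZMod p) ≃g annGraph (Fin ℓ → ZMod p), φ u = v := by
  have : Fact p.Prime := ⟨hp⟩
  have hG : ¬ IsAddCyclic (Fin ℓ → ZMod p) :=
    not_isAddCyclic_of_two_le_finrank (R := ZMod p) (by rwa [Module.finrank_fin_fun])
  rw [annGraph_eq_top p hG]
  exact ⟨.completeGraph (Equiv.swap u v), Equiv.swap_apply_left u v⟩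
end

section
/- Let p be a prime and α < β < γ positive integers, and let G = ℤ/p^αℤ × ℤ/p^βℤ × ℤ/p^γℤ viewed as a ℤ-module. Then [(0, 0, 0) : G] = p^γ ℤ; for every c ∈ O_{γ,p^i} with 0 ≤ i ≤ β−1, [(0, 0, c) : G] = p^β ℤ; and for every c ∈ O_{γ,p^i} with β ≤ i ≤ γ−1, [(0, 0, c) : G] = p^i ℤ. -/
/-!
Annihilators split over products: `[(0, b) : A × B] = [0 : A] ∩ [b : B]`. In `ℤ/mℤ` the
annihilator of the class of `c` is `ℤc + mℤ = gcd(c, m)ℤ`, which is `p^iℤ` when `m = p^γ` and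
`c ∈ O_{γ,p^i}` (including `0 ∈ O_{γ,p^γ}`). Hence
`[(0, 0, c) : G] = p^αℤ ∩ p^βℤ ∩ p^iℤ = p^{max(α, β, i)}ℤ`, and the three claims are the three
ways this maximum can be attained.
-/

@[simp]
lemma mem_annSet_zero {G : Type*} [AddCommGroup G] (x : ℤ) :
    x ∈ annSet (0 : G) ↔ ∀ g : G, x • g = 0 := by
  simp [annSet]

lemma annSet_zero_prod {A B : Type*} [AddCommGroup A] [AddCommGroup B] (b : B) :
    annSet ((0 : A), b) = annSet (0 : A) ∩ annSet b := by
  ext x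
  simp only [Set.mem_inter_iff, mem_annSet_zero]
  constructor
  · intro h
    refine ⟨fun g => ?_, fun g => ?_⟩
    · obtain ⟨n, hn⟩ := h (g, 0)
      simpa using congrArg Prod.fst hn
    · obtain ⟨n, hn⟩ := h (0, g)
      exact ⟨n, by simpa using congrArg Prod.snd hn⟩
  · rintro ⟨hA, hB⟩ ⟨a, b'⟩
    obtain ⟨n, hn⟩ := hB b'
    exact ⟨n, by simp [hA a, hn]⟩

lemma Int.gcd_dvd_iff_exists_modEq {c x : ℤ} {m : ℕ} :
    (Int.gcd c m : ℤ) ∣ x ↔ ∃ n : ℤ, x ≡ n * c [ZMOD m] := by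
  constructor
  · rintro ⟨k, rfl⟩
    refine ⟨k * c.gcdA m, Int.modEq_iff_dvd.mpr ⟨-(k * c.gcdB m), ?_⟩⟩
    linear_combination (-k) * Int.gcd_eq_gcd_ab c m
  · rintro ⟨n, hn⟩
    have hdvd : (Int.gcd c m : ℤ) ∣ n * c - x :=
      (Int.gcd_dvd_right c m).trans (Int.modEq_iff_dvd.mp hn)
    simpa using (Dvd.dvd.mul_left (Int.gcd_dvd_left c m) n).sub hdvd

lemma annSet_intCast_zmod (m : ℕ) (c : ℤ) :
    annSet (c : ZMod m) = {x : ℤ | (Int.gcd c m : ℤ) ∣ x} := by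
  ext x
  simp only [Set.mem_ofPred_eq, Int.gcd_dvd_iff_exists_modEq, ← ZMod.intCast_eq_intCast_iff]
  constructor
  · intro h
    obtain ⟨n, hn⟩ := h 1
    exact ⟨n, by simpa using hn⟩
  · rintro ⟨n, hn⟩ g
    obtain ⟨k, rfl⟩ := ZMod.intCast_surjective g
    refine ⟨k * n, ?_⟩
    simp only [zsmul_eq_mul, Int.cast_mul, hn]
    ring

lemma annSet_zero_zmod (m : ℕ) : annSet (0 : ZMod m) = {x : ℤ | (m : ℤ) ∣ x} := by
  simpa using annSet_intCast_zmod m 0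

lemma Int.gcd_pow_mul_pow_of_gcd_eq_one {p : ℕ} {b : ℤ} (hb : Int.gcd b p = 1) {i k : ℕ}
    (hik : i ≤ k) : Int.gcd ((p : ℤ) ^ i * b) ((p : ℤ) ^ k) = p ^ i := by
  obtain ⟨j, rfl⟩ := Nat.exists_eq_add_of_le hik
  have hbj : Int.gcd b ((p : ℤ) ^ j) = 1 :=
    Int.isCoprime_iff_gcd_eq_one.mp (Int.isCoprime_iff_gcd_eq_one.mpr hb).pow_right
  rw [pow_add, Int.gcd_mul_left, hbj, mul_one, Int.natAbs_pow, Int.natAbs_natCast]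

lemma annSet_of_mem_porbit {p γ i : ℕ} (hi : i ≤ γ) {c : ZMod (p ^ γ)} (hc : c ∈ porbit p γ i) :
    annSet c = {x : ℤ | (p : ℤ) ^ i ∣ x} := by
  obtain ⟨b, hb, rfl⟩ := hc
  rw [annSet_intCast_zmod, Nat.cast_pow, Int.gcd_pow_mul_pow_of_gcd_eq_one hb hi, Nat.cast_pow]

lemma zero_mem_porbit_self (p γ : ℕ) : (0 : ZMod (p ^ γ)) ∈ porbit p γ γ :=
  ⟨1, by simp, by
    rw [mul_one, eq_comm, ZMod.intCast_zmod_eq_zero_iff_dvd, Nat.cast_pow]⟩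

lemma setOf_pow_dvd_inter (a : ℤ) (j k : ℕ) :
    {x : ℤ | a ^ j ∣ x} ∩ {x | a ^ k ∣ x} = {x | a ^ max j k ∣ x} := by
  ext x
  rcases le_total j k with h | h
  · simpa [max_eq_right h] using fun hk => (pow_dvd_pow a h).trans hk
  · simpa [max_eq_left h] using fun hj => (pow_dvd_pow a h).trans hj

lemma annSet_zero_zero_of_mem_porbit {p α β γ i : ℕ} (hi : i ≤ γ) {c : ZMod (p ^ γ)}
    (hc : c ∈ porbit p γ i) :
    annSet ((0, 0, c) : ZMod (p ^ α) × ZMod (p ^ β) × ZMod (p ^ γ)) =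
      {x : ℤ | (p : ℤ) ^ max α (max β i) ∣ x} := by
  rw [annSet_zero_prod, annSet_zero_prod, annSet_zero_zmod, annSet_zero_zmod,
    annSet_of_mem_porbit hi hc]
  push_cast
  rw [setOf_pow_dvd_inter, setOf_pow_dvd_inter]

theorem annSet_triple_zero_zero_general (p α β γ : ℕ)
    (hαβ : α < β) (hβγ : β < γ) :
    annSet ((0, 0, 0) : ZMod (p ^ α) × ZMod (p ^ β) × ZMod (p ^ γ)) =
      {x : ℤ | (p : ℤ) ^ γ ∣ x} ∧
    (∀ i, i ≤ β - 1 → ∀ c ∈ porbit p γ i,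
      annSet ((0, 0, c) : ZMod (p ^ α) × ZMod (p ^ β) × ZMod (p ^ γ)) =
        {x : ℤ | (p : ℤ) ^ β ∣ x}) ∧
    (∀ i, β ≤ i → i ≤ γ - 1 → ∀ c ∈ porbit p γ i,
      annSet ((0, 0, c) : ZMod (p ^ α) × ZMod (p ^ β) × ZMod (p ^ γ)) =
        {x : ℤ | (p : ℤ) ^ i ∣ x}) := by
  refine ⟨?_, fun i hi c hc => ?_, fun i hβi hi c hc => ?_⟩
  · rw [annSet_zero_zero_of_mem_porbit le_rfl (zero_mem_porbit_self p γ),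
      show max α (max β γ) = γ by omega]
  · rw [annSet_zero_zero_of_mem_porbit (by omega) hc, show max α (max β i) = β by omega]
  · rw [annSet_zero_zero_of_mem_porbit (by omega) hc, show max α (max β i) = i by omega]

/-- for a prime `p`, positive integers `α < β < γ` and
`G = ℤ/p^αℤ × ℤ/p^βℤ × ℤ/p^γℤ`: `[(0,0,0) : G] = p^γℤ`; `[(0,0,c) : G] = p^βℤ` for
`c ∈ O_{γ,p^i}` with `0 ≤ i ≤ β-1`; and `[(0,0,c) : G] = p^iℤ` for `c ∈ O_{γ,p^i}` with
`β ≤ i ≤ γ-1`. -/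
theorem annSet_triple_zero_zero (p α β γ : ℕ) (hp : p.Prime) (hα : 0 < α)
    (hαβ : α < β) (hβγ : β < γ) :
    annSet ((0, 0, 0) : ZMod (p ^ α) × ZMod (p ^ β) × ZMod (p ^ γ)) =
      {x : ℤ | (p : ℤ) ^ γ ∣ x} ∧
    (∀ i, i ≤ β - 1 → ∀ c ∈ porbit p γ i,
      annSet ((0, 0, c) : ZMod (p ^ α) × ZMod (p ^ β) × ZMod (p ^ γ)) =
        {x : ℤ | (p : ℤ) ^ β ∣ x}) ∧
    (∀ i, β ≤ i → i ≤ γ - 1 → ∀ c ∈ porbit p γ i,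
      annSet ((0, 0, c) : ZMod (p ^ α) × ZMod (p ^ β) × ZMod (p ^ γ)) =
        {x : ℤ | (p : ℤ) ^ i ∣ x}) :=
  annSet_triple_zero_zero_general p α β γ hαβ hβγ
end

section
/- Let p be a prime and α < β < γ positive integers, and let G = ℤ/p^αℤ × ℤ/p^βℤ × ℤ/p^γℤ viewed as a ℤ-module. Fix b ∈ O_{β,p^j} with 0 ≤ j ≤ β−1. Then [(0, b, 0) : G] = p^γ ℤ; for c ∈ O_{γ,p^i} with 0 ≤ i ≤ j, [(0, b, c) : G] = p^β ℤ; for c ∈ O_{γ,p^i} with j+1 ≤ i ≤ γ−β+j, [(0, b, c) : G] = p^{i+β−j} ℤ; and for c ∈ O_{γ,p^i} with γ−β+j+1 ≤ i ≤ γ−1, [(0, b, c) : G] = p^γ ℤ. -/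
/-!
Since `x ↦ x • g` is additive, `x ∈ [a : G]` only has to be tested on the three standard
generators of `G`. For `a = (0, p^j u, p^i v)` with `u, v` prime to `p`, the generator
`(0, 1, 0)` asks for some `n` with `n • c = 0`, i.e. `p^(γ-i) ∣ n`, and `n • b = x`; such
`n • b` are exactly the residues divisible by `p^min(β, γ-i+j)`. Symmetrically `(0, 0, 1)`
gives `p^min(γ, β-j+i) ∣ x` and `(1, 0, 0)` gives `p^α ∣ x`, so `[a : G] = p^e ℤ` with `e` the
largest of the three exponents; the four cases of the theorem are the four ways this maximum
is attained, `c = 0` being `i = γ`.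
-/

theorem pow_max_dvd_iff {M : Type*} [Monoid M] (p x : M) (a b : ℕ) :
    p ^ max a b ∣ x ↔ p ^ a ∣ x ∧ p ^ b ∣ x := by
  refine ⟨fun h => ⟨(pow_dvd_pow p (le_max_left a b)).trans h,
    (pow_dvd_pow p (le_max_right a b)).trans h⟩, fun ⟨ha, hb⟩ => ?_⟩
  rcases max_choice a b with h | h <;> rw [h] <;> assumption

section annSet

variable {G : Type*} [AddCommGroup G]

theorem mem_annSet_iff_forall_zsmul_mem {a : G} {x : ℤ} :
    x ∈ annSet a ↔ ∀ g : G, x • g ∈ AddSubgroup.zmultiples a :=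
  forall_congr' fun _ => by
    rw [AddSubgroup.mem_zmultiples_iff]
    exact exists_congr fun _ => eq_comm

theorem mem_annSet_iff_of_closure_eq_top {s : Set G} (hs : AddSubgroup.closure s = ⊤)
    {a : G} {x : ℤ} : x ∈ annSet a ↔ ∀ g ∈ s, x • g ∈ AddSubgroup.zmultiples a := by
  rw [mem_annSet_iff_forall_zsmul_mem]
  let H := (AddSubgroup.zmultiples a).comap (zsmulAddGroupHom x)
  change (∀ g, g ∈ H) ↔ s ⊆ H
  rw [← AddSubgroup.closure_le, hs]
  exact ⟨fun h g _ => h g, fun h g => h (AddSubgroup.mem_top g)⟩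

end annSet

theorem ZMod.closure_basis_eq_top (l m n : ℕ) :
    AddSubgroup.closure ({(1, 0, 0), (0, 1, 0), (0, 0, 1)} : Set (ZMod l × ZMod m × ZMod n)) =
      ⊤ := by
  refine eq_top_iff.mpr fun g _ => ?_
  have hg : g = (g.1.cast : ℤ) • ((1, 0, 0) : ZMod l × ZMod m × ZMod n) +
      (g.2.1.cast : ℤ) • (0, 1, 0) + (g.2.2.cast : ℤ) • (0, 0, 1) := by
    ext <;> simp
  rw [hg]
  refine add_mem (add_mem ?_ ?_) ?_ <;>
    exact zsmul_mem (AddSubgroup.subset_closure (by simp)) _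

section PrimePower

variable {p : ℕ}

theorem pow_dvd_mul_pow_mul_iff (hp : p ≠ 0) {v : ℤ} (hv : IsCoprime v p) {i m : ℕ}
    (him : i ≤ m) (n : ℤ) : (p : ℤ) ^ m ∣ n * ((p : ℤ) ^ i * v) ↔ (p : ℤ) ^ (m - i) ∣ n := by
  have hcop : IsCoprime ((p : ℤ) ^ m) v := (hv.pow_right (n := m)).symm
  have hcancel : (p : ℤ) ^ m ∣ n * (p : ℤ) ^ i * v ↔ (p : ℤ) ^ m ∣ n * (p : ℤ) ^ i :=
    ⟨hcop.dvd_of_dvd_mul_right, fun h => h.mul_right v⟩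
  rw [← mul_assoc, hcancel, ← Nat.sub_add_cancel him, pow_add, Nat.add_sub_cancel,
    mul_dvd_mul_iff_right (pow_ne_zero i (by exact_mod_cast hp))]

theorem zsmul_pow_mul_eq_zero_iff (hp : p ≠ 0) {v : ℤ} (hv : IsCoprime v p) {i m : ℕ}
    (him : i ≤ m) (n : ℤ) :
    n • (((p : ℤ) ^ i * v : ℤ) : ZMod (p ^ m)) = 0 ↔ (p : ℤ) ^ (m - i) ∣ n := by
  rw [zsmul_eq_mul, ← Int.cast_mul, ZMod.intCast_zmod_eq_zero_iff_dvd, Nat.cast_pow,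
    pow_dvd_mul_pow_mul_iff hp hv him]

theorem exists_pow_dvd_zsmul_eq_iff {v : ℤ} (hv : IsCoprime v p) (k i m : ℕ) (x : ℤ) :
    (∃ n : ℤ, (p : ℤ) ^ k ∣ n ∧ n • (((p : ℤ) ^ i * v : ℤ) : ZMod (p ^ m)) = x) ↔
      (p : ℤ) ^ min m (k + i) ∣ x := by
  simp only [zsmul_eq_mul, ← Int.cast_mul, ZMod.intCast_eq_intCast_iff_dvd_sub, Nat.cast_pow]
  constructor
  · rintro ⟨_, ⟨t, rfl⟩, hx⟩
    have hmul : (p : ℤ) ^ (k + i) ∣ (p : ℤ) ^ k * t * ((p : ℤ) ^ i * v) :=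
      ⟨t * v, by rw [pow_add]; ring⟩
    simpa using dvd_add ((pow_dvd_pow _ (min_le_left _ (k + i))).trans hx)
      ((pow_dvd_pow _ (min_le_right m _)).trans hmul)
  · intro hx
    rcases le_total m (k + i) with hm | hm
    · refine ⟨0, dvd_zero _, ?_⟩
      simpa [min_eq_left hm] using hx
    · obtain ⟨s, rfl⟩ := hx
      obtain ⟨w, z, hwz⟩ := hv.pow_right (n := m)
      refine ⟨(p : ℤ) ^ k * s * w, dvd_mul_of_dvd_left (dvd_mul_right _ _) _,
        ⟨(p : ℤ) ^ k * (p : ℤ) ^ i * s * z, ?_⟩⟩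
      rw [min_eq_right hm, pow_add]
      linear_combination -(p : ℤ) ^ k * (p : ℤ) ^ i * s * hwz

theorem annSet_zero_pow_mul_pow_mul (hp : p ≠ 0) {α β γ i j : ℕ} (hj : j ≤ β) (hi : i ≤ γ)
    {u v : ℤ} (hu : IsCoprime u p) (hv : IsCoprime v p) :
    annSet ((0, (((p : ℤ) ^ j * u : ℤ) : ZMod (p ^ β)), (((p : ℤ) ^ i * v : ℤ) : ZMod (p ^ γ))) :
        ZMod (p ^ α) × ZMod (p ^ β) × ZMod (p ^ γ)) =
      {x : ℤ | (p : ℤ) ^ max α (max (min β (γ - i + j)) (min γ (β - j + i))) ∣ x} := by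
  ext x
  rw [mem_annSet_iff_of_closure_eq_top (ZMod.closure_basis_eq_top _ _ _), Set.mem_ofPred_eq,
    pow_max_dvd_iff, pow_max_dvd_iff, ← exists_pow_dvd_zsmul_eq_iff hu (γ - i) j β,
    ← exists_pow_dvd_zsmul_eq_iff hv (β - j) i γ]
  simp only [Set.forall_mem_insert, Set.mem_singleton_iff, forall_eq]
  simp only [AddSubgroup.mem_zmultiples_iff, Prod.smul_mk, smul_zero, zsmul_one, Prod.ext_iff,
    zsmul_pow_mul_eq_zero_iff hp hu hj, zsmul_pow_mul_eq_zero_iff hp hv hi, true_and]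
  refine and_congr ?_ (and_congr (exists_congr fun _ => and_comm) Iff.rfl)
  · rw [← Nat.cast_pow p α, ← ZMod.intCast_zmod_eq_zero_iff_dvd]
    exact ⟨fun ⟨_, hx, _⟩ => hx.symm, fun hx => ⟨0, hx.symm, dvd_zero _, dvd_zero _⟩⟩

end PrimePower

theorem annSet_triple_zero_b_general (p α β γ : ℕ) (hp : p.Prime)
    (hαβ : α < β) (hβγ : β < γ) (j : ℕ) (hj : j ≤ β - 1)
    (b : ZMod (p ^ β)) (hb : b ∈ porbit p β j) :
    annSet ((0, b, 0) : ZMod (p ^ α) × ZMod (p ^ β) × ZMod (p ^ γ)) =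
      {x : ℤ | (p : ℤ) ^ γ ∣ x} ∧
    (∀ i, i ≤ j → ∀ c ∈ porbit p γ i,
      annSet ((0, b, c) : ZMod (p ^ α) × ZMod (p ^ β) × ZMod (p ^ γ)) =
        {x : ℤ | (p : ℤ) ^ β ∣ x}) ∧
    (∀ i, j + 1 ≤ i → i ≤ γ - β + j → ∀ c ∈ porbit p γ i,
      annSet ((0, b, c) : ZMod (p ^ α) × ZMod (p ^ β) × ZMod (p ^ γ)) =
        {x : ℤ | (p : ℤ) ^ (i + β - j) ∣ x}) ∧
    (∀ i, γ - β + j + 1 ≤ i → i ≤ γ - 1 → ∀ c ∈ porbit p γ i,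
      annSet ((0, b, c) : ZMod (p ^ α) × ZMod (p ^ β) × ZMod (p ^ γ)) =
        {x : ℤ | (p : ℤ) ^ γ ∣ x}) := by
  obtain ⟨u, hu, rfl⟩ := hb
  have hp0 : p ≠ 0 := hp.ne_zero
  have annSet_eq (i : ℕ) (hi : i ≤ γ) (v : ℤ) (hv : Int.gcd v p = 1) (e : ℕ)
      (he : max α (max (min β (γ - i + j)) (min γ (β - j + i))) = e) :
      annSet ((0, (((p : ℤ) ^ j * u : ℤ) : ZMod (p ^ β)), (((p : ℤ) ^ i * v : ℤ) : ZMod (p ^ γ))) :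
        ZMod (p ^ α) × ZMod (p ^ β) × ZMod (p ^ γ)) = {x : ℤ | (p : ℤ) ^ e ∣ x} :=
    he ▸ annSet_zero_pow_mul_pow_mul hp.ne_zero (by omega) hi
      (Int.isCoprime_iff_gcd_eq_one.mpr hu) (Int.isCoprime_iff_gcd_eq_one.mpr hv)
  have hzero : (0 : ZMod (p ^ γ)) = (((p : ℤ) ^ γ * 1 : ℤ) : ZMod (p ^ γ)) := by
    rw [mul_one, ← Nat.cast_pow, Int.cast_natCast, ZMod.natCast_self]
  refine ⟨hzero ▸ annSet_eq γ le_rfl 1 (Int.gcd_one_left _) γ (by omega), ?_, ?_, ?_⟩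
  · rintro i hij _ ⟨v, hv, rfl⟩
    exact annSet_eq i (by omega) v hv β (by omega)
  · rintro i hji hiγ _ ⟨v, hv, rfl⟩
    exact annSet_eq i (by omega) v hv _ (by omega)
  · rintro i hγi hiγ _ ⟨v, hv, rfl⟩
    exact annSet_eq i (by omega) v hv γ (by omega)

/-- for a prime `p`, positive integers `α < β < γ`,
`G = ℤ/p^αℤ × ℤ/p^βℤ × ℤ/p^γℤ` and `b ∈ O_{β,p^j}` with `0 ≤ j ≤ β-1`:
`[(0,b,0) : G] = p^γℤ`; `[(0,b,c) : G] = p^βℤ` for `c ∈ O_{γ,p^i}` with `0 ≤ i ≤ j`;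
`[(0,b,c) : G] = p^(i+β-j)ℤ` for `c ∈ O_{γ,p^i}` with `j+1 ≤ i ≤ γ-β+j`; and
`[(0,b,c) : G] = p^γℤ` for `c ∈ O_{γ,p^i}` with `γ-β+j+1 ≤ i ≤ γ-1`. -/
theorem annSet_triple_zero_b (p α β γ : ℕ) (hp : p.Prime) (hα : 0 < α)
    (hαβ : α < β) (hβγ : β < γ) (j : ℕ) (hj : j ≤ β - 1)
    (b : ZMod (p ^ β)) (hb : b ∈ porbit p β j) :
    annSet ((0, b, 0) : ZMod (p ^ α) × ZMod (p ^ β) × ZMod (p ^ γ)) =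
      {x : ℤ | (p : ℤ) ^ γ ∣ x} ∧
    (∀ i, i ≤ j → ∀ c ∈ porbit p γ i,
      annSet ((0, b, c) : ZMod (p ^ α) × ZMod (p ^ β) × ZMod (p ^ γ)) =
        {x : ℤ | (p : ℤ) ^ β ∣ x}) ∧
    (∀ i, j + 1 ≤ i → i ≤ γ - β + j → ∀ c ∈ porbit p γ i,
      annSet ((0, b, c) : ZMod (p ^ α) × ZMod (p ^ β) × ZMod (p ^ γ)) =
        {x : ℤ | (p : ℤ) ^ (i + β - j) ∣ x}) ∧
    (∀ i, γ - β + j + 1 ≤ i → i ≤ γ - 1 → ∀ c ∈ porbit p γ i,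
      annSet ((0, b, c) : ZMod (p ^ α) × ZMod (p ^ β) × ZMod (p ^ γ)) =
        {x : ℤ | (p : ℤ) ^ γ ∣ x}) :=
  annSet_triple_zero_b_general p α β γ hp hαβ hβγ j hj b hb
end

section
/- Let p be a prime and α ≥ 1 an integer. The group-annihilator graph Γ(ℤ/p^αℤ) is connected and contains no alternating 4-cycle; in other words, Γ(ℤ/p^αℤ) is a connected threshold graph. -/
/-!
In `ℤ/nℤ` the annihilator `[a : G]` consists of the integers that reduce to multiples of `a`,
so `a` and `b` are adjacent exactly when `a ≠ b` and `a * b = 0`. Hence `0` is adjacent to every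
other vertex, which gives connectedness. For `n = p ^ α` divisibility is a total preorder, since
`ℤ/p^αℤ` is a quotient of the valuation ring `ℤ_[p]`; comparing `a` with `d` then shows that
`a * b = 0`, `c * d = 0` and `a * c ≠ 0` force `b * d = 0`, so there is no alternating 4-cycle.
-/

namespace ZMod

variable {n : ℕ}

lemma intCast_mem_annSet {X : ℤ} {a : ZMod n} (hX : (X : ZMod n) = a) : X ∈ annSet a := by
  intro g
  obtain ⟨M, rfl⟩ := intCast_surjective g
  exact ⟨M, by rw [zsmul_eq_mul, zsmul_eq_mul, hX, mul_comm]⟩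

lemma exists_intCast_eq_mul_of_mem_annSet {x : ℤ} {a : ZMod n} (hx : x ∈ annSet a) :
    ∃ m : ℤ, (x : ZMod n) = m * a := by
  obtain ⟨m, hm⟩ := hx 1
  exact ⟨m, by simpa only [zsmul_eq_mul, mul_one] using hm⟩

lemma annGraph_adj_iff {a b : ZMod n} :
    (annGraph (ZMod n)).Adj a b ↔ a ≠ b ∧ a * b = 0 := by
  refine and_congr_right fun _ => ⟨fun h => ?_, fun hab x hx y hy g => ?_⟩
  · obtain ⟨X, rfl⟩ := intCast_surjective a
    obtain ⟨Y, rfl⟩ := intCast_surjective b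
    simpa using h X (intCast_mem_annSet rfl) Y (intCast_mem_annSet rfl) 1
  · obtain ⟨m, hm⟩ := exists_intCast_eq_mul_of_mem_annSet hx
    obtain ⟨k, hk⟩ := exists_intCast_eq_mul_of_mem_annSet hy
    rw [zsmul_eq_mul, Int.cast_mul, hm, hk]
    linear_combination (m * k * g : ZMod n) * hab

lemma isUniversal_annGraph_zero : (annGraph (ZMod n)).IsUniversal 0 :=
  fun b hb => annGraph_adj_iff.mpr ⟨hb, zero_mul b⟩

instance preValuationRing_pow (p k : ℕ) [Fact p.Prime] : PreValuationRing (ZMod (p ^ k)) :=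
  (ringHom_surjective (PadicInt.toZModPow k)).preValuationRing
    (PadicInt.toZModPow k : ℤ_[p] →+* ZMod (p ^ k)).toMonoidHom.toMulHom

end ZMod

lemma PreValuationRing.mul_eq_zero_of_mul_eq_zero_of_mul_ne_zero {M : Type*}
    [CommMonoidWithZero M] [PreValuationRing M] {a b c d : M}
    (hab : a * b = 0) (hcd : c * d = 0) (hac : a * c ≠ 0) : b * d = 0 := by
  rcases ValuationRing.dvd_total a d with ⟨u, rfl⟩ | ⟨u, rfl⟩
  · rw [← mul_assoc, mul_comm b, hab, zero_mul]
  · exact absurd (by rw [mul_right_comm, mul_comm d, hcd, zero_mul]) hac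

theorem annGraph_connected_threshold_general (p α : ℕ) (hp : p.Prime) :
    (annGraph (ZMod (p ^ α))).Connected ∧
    ¬ ∃ a b c d : ZMod (p ^ α),
        a ≠ b ∧ a ≠ c ∧ a ≠ d ∧ b ≠ c ∧ b ≠ d ∧ c ≠ d ∧
        (annGraph (ZMod (p ^ α))).Adj a b ∧ (annGraph (ZMod (p ^ α))).Adj c d ∧
        ¬ (annGraph (ZMod (p ^ α))).Adj a c ∧ ¬ (annGraph (ZMod (p ^ α))).Adj b d := by
  have : Fact p.Prime := ⟨hp⟩
  refine ⟨.of_isUniversal ZMod.isUniversal_annGraph_zero, ?_⟩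
  rintro ⟨a, b, c, d, -, hac, -, -, hbd, -, hAdj_ab, hAdj_cd, hAdj_ac, hAdj_bd⟩
  simp only [ZMod.annGraph_adj_iff] at hAdj_ab hAdj_cd hAdj_ac hAdj_bd
  refine hAdj_bd ⟨hbd, ?_⟩
  exact PreValuationRing.mul_eq_zero_of_mul_eq_zero_of_mul_ne_zero
    hAdj_ab.2 hAdj_cd.2 fun hac0 => hAdj_ac ⟨hac, hac0⟩

/-- for a prime `p` and `α ≥ 1`, the graph `Γ(ℤ/p^αℤ)` is connected and has
no alternating 4-cycle, i.e. it is a connected threshold graph. -/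
theorem annGraph_connected_threshold (p α : ℕ) (hp : p.Prime) (hα : 1 ≤ α) :
    (annGraph (ZMod (p ^ α))).Connected ∧
    ¬ ∃ a b c d : ZMod (p ^ α),
        a ≠ b ∧ a ≠ c ∧ a ≠ d ∧ b ≠ c ∧ b ≠ d ∧ c ≠ d ∧
        (annGraph (ZMod (p ^ α))).Adj a b ∧ (annGraph (ZMod (p ^ α))).Adj c d ∧
        ¬ (annGraph (ZMod (p ^ α))).Adj a c ∧ ¬ (annGraph (ZMod (p ^ α))).Adj b d :=
  annGraph_connected_threshold_general p α hp
end

section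
/- For every prime p ≥ 7 there exists a simple graph H on p² vertices that is connected and contains no alternating 4-cycle (i.e. H is a connected threshold graph) such that E(Γ(ℤ/p²ℤ)) < E(H) < E(K_{p²}) = 2(p² − 1), where Γ(ℤ/p²ℤ) is the group-annihilator graph of ℤ/p²ℤ and K_{p²} is the complete graph on p² vertices. -/
/-- The adjacency matrix of a simple graph over `ℝ` is Hermitian. -/
theorem adjMatrix_isHermitian {V : Type*} [Fintype V] [DecidableEq V] (G : SimpleGraph V)
    [DecidableRel G.Adj] : (G.adjMatrix ℝ).IsHermitian := by
  ext i j
  simp [Matrix.conjTranspose_apply, SimpleGraph.adjMatrix_apply, SimpleGraph.adj_comm]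

/-- The energy of a finite simple graph: the sum of the absolute values of the eigenvalues
(with multiplicity) of its adjacency matrix. -/
noncomputable def graphEnergy {V : Type*} [Fintype V] [DecidableEq V]
    (G : SimpleGraph V) : ℝ :=
  letI := Classical.decRel G.Adj
  ∑ i, |(adjMatrix_isHermitian G).eigenvalues i|

/-!
Take for `H` the complete split graph: a clique on `p` vertices, each joined to all of the
remaining `p² - p` vertices, which are pairwise non-adjacent. It is connected and threshold.

Energies are compared through two bounds valid for every graph. The adjacency eigenvalues `λᵢ`
sum to `0`, so `|λᵢ| ≤ E/2` for each `i` and `E² ≥ 2 ∑ λᵢ² = 2 ∑ deg`; Cauchy–Schwarz over the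
nonzero eigenvalues gives `E² ≤ rank · ∑ deg`. Both `Γ(ℤ/p²ℤ)` and `H` have rank at most `p + 1`:
outside a set of `p` vertices all columns of the adjacency matrix coincide (in `Γ`, a unit is
adjacent only to `0`). With `∑ deg ≤ 3p²` for `Γ` and `∑ deg = 2p³ - p² - p` for `H`, for `p ≥ 7`
  `E(Γ)² ≤ 3p²(p + 1) < 2(2p³ - p² - p) ≤ E(H)²`,
  `E(H)² ≤ (p + 1)(2p³ - p² - p) < 4(p² - 1)² = E(K_{p²})²`.
The energy of `K_n` comes from `A² = (n - 2)A + (n - 1)I`: its eigenvalues are `-1` and `n - 1`.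
-/

open Finset Matrix SimpleGraph

namespace Matrix.IsHermitian

variable {n : Type*} [Fintype n] [DecidableEq n] {A : Matrix n n ℝ} (hA : A.IsHermitian)

lemma trace_mul_self_eq_sum_sq_eigenvalues :
    (A * A).trace = ∑ i, hA.eigenvalues i ^ 2 := by
  conv_lhs => rw [hA.spectral_theorem, ← map_mul, Unitary.conjStarAlgAut_apply, trace_mul_cycle,
    Unitary.coe_star_mul_self, one_mul, diagonal_mul_diagonal, trace_diagonal]
  simp [sq]

lemma eigenvalues_sq_eq_of_mul_self_eq {c₁ c₀ : ℝ} (h : A * A = c₁ • A + c₀ • 1) (i : n) :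
    hA.eigenvalues i ^ 2 = c₁ * hA.eigenvalues i + c₀ := by
  have hv := hA.mulVec_eigenvectorBasis i
  set v : n → ℝ := ⇑(hA.eigenvectorBasis i)
  have hv0 : v ≠ 0 := (WithLp.ofLp_eq_zero 2).ne.2 (hA.eigenvectorBasis.orthonormal.ne_zero i)
  have key := congrArg (· *ᵥ v) h
  simp only [← mulVec_mulVec, add_mulVec, smul_mulVec, one_mulVec, hv, mulVec_smul,
    smul_smul, ← add_smul] at key
  have := smul_left_injective ℝ hv0 key
  linear_combination this

lemma two_mul_trace_mul_self_le_sq_sum_abs_eigenvalues (h0 : A.trace = 0) :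
    2 * (A * A).trace ≤ (∑ i, |hA.eigenvalues i|) ^ 2 := by
  set μ := hA.eigenvalues
  set E := ∑ i, |μ i|
  have hsum : ∑ i, μ i = 0 := by simpa [h0] using hA.trace_eq_sum_eigenvalues.symm
  have hhalf : ∀ j, 2 * |μ j| ≤ E := fun j => by
    have h1 := Finset.add_sum_erase univ μ (mem_univ j)
    have h2 := Finset.add_sum_erase univ (fun i => |μ i|) (mem_univ j)
    have h3 : |μ j| ≤ ∑ i ∈ univ.erase j, |μ i| := by
      rw [show μ j = -∑ i ∈ univ.erase j, μ i by linarith, abs_neg]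
      exact abs_sum_le_sum_abs _ _
    linarith
  calc 2 * (A * A).trace = 2 * ∑ i, |μ i| * |μ i| := by
        simp [hA.trace_mul_self_eq_sum_sq_eigenvalues, μ, sq]
    _ ≤ 2 * ∑ i, |μ i| * (E / 2) := by
        gcongr with i; linarith [hhalf i]
    _ = E ^ 2 := by rw [← sum_mul]; ring

lemma sq_sum_abs_eigenvalues_le_rank_mul_trace :
    (∑ i, |hA.eigenvalues i|) ^ 2 ≤ A.rank * (A * A).trace := by
  set s := univ.filter fun i => hA.eigenvalues i ≠ 0
  have hs : (s.card : ℝ) = A.rank := by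
    rw [hA.rank_eq_card_non_zero_eigs, Fintype.card_subtype]
  have hsupp : ∑ i ∈ s, |hA.eigenvalues i| = ∑ i, |hA.eigenvalues i| :=
    sum_filter_of_ne fun i _ hi h0 => hi (by simp [h0])
  rw [← hs, hA.trace_mul_self_eq_sum_sq_eigenvalues, ← hsupp]
  calc (∑ i ∈ s, |hA.eigenvalues i|) ^ 2 ≤ s.card * ∑ i ∈ s, |hA.eigenvalues i| ^ 2 :=
        sq_sum_le_card_mul_sum_sq
    _ ≤ s.card * ∑ i, hA.eigenvalues i ^ 2 := by
        simp only [sq_abs]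
        gcongr
        exact subset_univ s

end Matrix.IsHermitian

lemma Matrix.rank_le_card_of_forall_col_mem {K m n : Type*} [Field K] [Fintype m] [Fintype n]
    {A : Matrix m n K} (S : Finset (m → K)) (h : ∀ j, Aᵀ j ∈ S) : A.rank ≤ #S := by
  rw [rank_eq_finrank_span_cols]
  calc Module.finrank K (Submodule.span K (Set.range Aᵀ))
      ≤ Module.finrank K (Submodule.span K (S : Set (m → K))) :=
        Submodule.finrank_mono (Submodule.span_mono (Set.range_subset_iff.2 h))
    _ ≤ #S := finrank_span_finset_le_card S

namespace SimpleGraph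

variable {V : Type*} [Fintype V]

lemma trace_adjMatrix_mul_self (G : SimpleGraph V) [DecidableRel G.Adj] :
    (G.adjMatrix ℝ * G.adjMatrix ℝ).trace = ∑ v, (G.degree v : ℝ) := by
  simp only [Matrix.trace, diag_apply, adjMatrix_mul_self_apply_self]

variable [DecidableEq V]

lemma rank_adjMatrix_le_of_forall_notMem {K : Type*} [Field K] (G : SimpleGraph V)
    [DecidableRel G.Adj] (S T : Finset V) (h : ∀ j ∉ S, ∀ i, G.Adj i j ↔ i ∈ T) :
    (G.adjMatrix K).rank ≤ #S + 1 := by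
  classical
  let col : V → V → K := fun j => (G.adjMatrix K)ᵀ j
  calc (G.adjMatrix K).rank ≤ #(insert (fun i => if i ∈ T then 1 else 0) (S.image col)) := by
        refine rank_le_card_of_forall_col_mem _ fun j => ?_
        by_cases hj : j ∈ S
        · exact mem_insert_of_mem (mem_image_of_mem col hj)
        · refine mem_insert.2 (Or.inl (funext fun i => ?_))
          simp [adjMatrix_apply, h j hj i]
    _ ≤ #S + 1 := (card_insert_le _ _).trans (by gcongr; exact card_image_le)

lemma graphEnergy_eq_sum_abs_eigenvalues (G : SimpleGraph V) [DecidableRel G.Adj] :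
    graphEnergy G = ∑ i, |(adjMatrix_isHermitian G).eigenvalues i| := by
  unfold graphEnergy
  congr!

lemma graphEnergy_nonneg (G : SimpleGraph V) : 0 ≤ graphEnergy G :=
  sum_nonneg fun _ _ => abs_nonneg _

lemma two_mul_sum_degree_le_graphEnergy_sq (G : SimpleGraph V) [DecidableRel G.Adj] :
    2 * ∑ v, (G.degree v : ℝ) ≤ graphEnergy G ^ 2 := by
  rw [← trace_adjMatrix_mul_self, graphEnergy_eq_sum_abs_eigenvalues]
  exact (adjMatrix_isHermitian G).two_mul_trace_mul_self_le_sq_sum_abs_eigenvalues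
    (trace_adjMatrix ℝ G)

lemma graphEnergy_sq_le_rank_mul_sum_degree (G : SimpleGraph V) [DecidableRel G.Adj] :
    graphEnergy G ^ 2 ≤ (G.adjMatrix ℝ).rank * ∑ v, (G.degree v : ℝ) := by
  rw [← trace_adjMatrix_mul_self, graphEnergy_eq_sum_abs_eigenvalues]
  exact (adjMatrix_isHermitian G).sq_sum_abs_eigenvalues_le_rank_mul_trace

lemma adjMatrix_top_mul_self :
    (⊤ : SimpleGraph V).adjMatrix ℝ * (⊤ : SimpleGraph V).adjMatrix ℝ =
      ((Fintype.card V : ℝ) - 2) • (⊤ : SimpleGraph V).adjMatrix ℝ +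
        ((Fintype.card V : ℝ) - 1) • 1 := by
  set A := (⊤ : SimpleGraph V).adjMatrix ℝ
  -- `A + 1` is the all-ones matrix `J`, and `J * J = |V| • J`
  have hJ : (A + 1) * (A + 1) = (Fintype.card V : ℝ) • (A + 1) := by
    have hJ' : A + 1 = of fun _ _ => 1 := by
      ext i j; by_cases hij : i = j <;> simp [A, hij, one_apply]
    rw [hJ']; ext i j; simp [mul_apply]
  have hA : A * A = (A + 1) * (A + 1) - 2 • A - 1 := by noncomm_ring
  rw [hA, hJ]
  module

lemma graphEnergy_top [Nonempty V] :
    graphEnergy (⊤ : SimpleGraph V) = 2 * ((Fintype.card V : ℝ) - 1) := by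
  have hA := adjMatrix_isHermitian (⊤ : SimpleGraph V)
  set n : ℝ := (Fintype.card V : ℝ)
  have hn : 1 ≤ n := by simp [n, Nat.one_le_iff_ne_zero, Fintype.card_ne_zero]
  have hsum : ∑ i, hA.eigenvalues i = 0 := by
    simpa using (hA.trace_eq_sum_eigenvalues.symm.trans (trace_adjMatrix ℝ _))
  -- every eigenvalue is `-1` or `n - 1`, and on these two values `|x|` is affine in `x`
  have habs : ∀ i, n * |hA.eigenvalues i| = (n - 2) * hA.eigenvalues i + 2 * (n - 1) := by
    intro i
    have h := hA.eigenvalues_sq_eq_of_mul_self_eq adjMatrix_top_mul_self i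
    have : (hA.eigenvalues i + 1) * (hA.eigenvalues i - (n - 1)) = 0 := by
      linear_combination h
    rcases mul_eq_zero.1 this with h' | h'
    · rw [show hA.eigenvalues i = -1 by linarith]; norm_num; ring
    · rw [show hA.eigenvalues i = n - 1 by linarith, abs_of_nonneg (by linarith)]; ring
  have key : n * graphEnergy (⊤ : SimpleGraph V) = n * (2 * (n - 1)) := by
    rw [graphEnergy_eq_sum_abs_eigenvalues, mul_sum, sum_congr rfl fun i _ => habs i,
      sum_add_distrib, ← mul_sum, hsum, sum_const, card_univ, nsmul_eq_mul]
    ring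
  exact mul_left_cancel₀ (by linarith) key

end SimpleGraph

def completeSplitGraph (n k : ℕ) : SimpleGraph (Fin n) where
  Adj a b := a ≠ b ∧ (a.val < k ∨ b.val < k)
  symm := ⟨fun _ _ h => ⟨h.1.symm, h.2.symm⟩⟩
  loopless := ⟨fun _ h => h.1 rfl⟩

namespace completeSplitGraph

variable {n k : ℕ}

@[simp]
lemma adj_iff {a b : Fin n} :
    (completeSplitGraph n k).Adj a b ↔ a ≠ b ∧ (a.val < k ∨ b.val < k) := Iff.rfl

instance : DecidableRel (completeSplitGraph n k).Adj := fun _ _ => decidable_of_iff' _ adj_iff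

lemma connected [NeZero n] (hk : 0 < k) : (completeSplitGraph n k).Connected := by
  have hc : ∀ x, (completeSplitGraph n k).Reachable x 0 := fun x => by
    by_cases hx : x = 0
    · rw [hx]
    · exact Adj.reachable (adj_iff.2 ⟨hx, Or.inr hk⟩)
  exact (connected_iff _).2 ⟨fun u v => (hc u).trans (hc v).symm, ⟨0⟩⟩

lemma not_exists_alternating_four_cycle :
    ¬ ∃ a b c d : Fin n,
        a ≠ b ∧ a ≠ c ∧ a ≠ d ∧ b ≠ c ∧ b ≠ d ∧ c ≠ d ∧
        (completeSplitGraph n k).Adj a b ∧ (completeSplitGraph n k).Adj c d ∧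
        ¬ (completeSplitGraph n k).Adj a c ∧ ¬ (completeSplitGraph n k).Adj b d := by
  rintro ⟨a, b, c, d, -, hac, -, -, hbd, -, hab, -, hnac, hnbd⟩
  simp only [adj_iff, not_and, not_or, not_lt] at hab hnac hnbd
  have := hnac hac
  have := hnbd hbd
  omega

lemma degree_eq (hkn : k ≤ n) (a : Fin n) :
    (completeSplitGraph n k).degree a = if a.val < k then n - 1 else k := by
  split_ifs with ha
  · rw [← card_neighborFinset_eq_degree,
      show (completeSplitGraph n k).neighborFinset a = univ.erase a by ext; simp [ha, eq_comm],
      card_erase_of_mem (mem_univ a), card_univ, Fintype.card_fin]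
  · rw [← card_neighborFinset_eq_degree,
      show (completeSplitGraph n k).neighborFinset a = ({b | b.val < k} : Finset (Fin n)) by
        ext b; simp only [mem_neighborFinset, adj_iff, mem_filter_univ]; grind,
      Fin.card_filter_val_lt, min_eq_right hkn]

lemma sum_degree (hkn : k ≤ n) :
    ∑ a, (completeSplitGraph n k).degree a = k * (n - 1) + (n - k) * k := by
  have hlow : #{a : Fin n | a.val < k} = k := by rw [Fin.card_filter_val_lt, min_eq_right hkn]
  have hhigh : #{a : Fin n | ¬ a.val < k} = n - k := by
    rw [filter_not, card_sdiff_of_subset (filter_subset _ _), hlow, card_univ, Fintype.card_fin]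
  simp only [degree_eq hkn, sum_ite, sum_const, hlow, hhigh, smul_eq_mul]

lemma rank_adjMatrix_le : ((completeSplitGraph n k).adjMatrix ℝ).rank ≤ k + 1 := by
  let S : Finset (Fin n) := {b | b.val < k}
  calc _ ≤ #S + 1 := rank_adjMatrix_le_of_forall_notMem _ S S fun j hj i => by
          simp only [S, mem_filter_univ, adj_iff] at hj ⊢; grind
    _ ≤ k + 1 := by simp [S, Fin.card_filter_val_lt]

end completeSplitGraph

lemma annGraph_adj_zero {G : Type*} [AddCommGroup G] {b : G} (hb : b ≠ 0) :
    (annGraph G).Adj 0 b := by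
  refine ⟨hb.symm, fun x hx y _ g => ?_⟩
  obtain ⟨m, hm⟩ := hx (y • g)
  rw [mul_smul, hm, smul_zero]

namespace ZMod

lemma val_mem_annSet {n : ℕ} [NeZero n] (a : ZMod n) : (a.val : ℤ) ∈ annSet a := fun g =>
  ⟨g.val, by simp only [zsmul_eq_mul, Int.cast_natCast, natCast_zmod_val, mul_comm]⟩

lemma dvd_val_mul_val_of_annGraph_adj {n : ℕ} [NeZero n] {a b : ZMod n}
    (h : (annGraph (ZMod n)).Adj a b) : n ∣ a.val * b.val := by
  have := h.2 _ a.val_mem_annSet _ b.val_mem_annSet 1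
  rw [zsmul_eq_mul, mul_one] at this
  exact (natCast_eq_zero_iff _ _).1 (by exact_mod_cast this)

lemma dvd_val_of_annGraph_adj {p : ℕ} [hp : Fact p.Prime] {a b : ZMod (p ^ 2)}
    (h : (annGraph (ZMod (p ^ 2))).Adj a b) (hb : b ≠ 0) : p ∣ a.val := by
  by_contra hpa
  have hcop : Nat.Coprime (p ^ 2) a.val :=
    ((Nat.Prime.coprime_iff_not_dvd hp.out).2 hpa).pow_left 2
  have hdvd : p ^ 2 ∣ b.val := hcop.dvd_of_dvd_mul_left (dvd_val_mul_val_of_annGraph_adj h)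
  exact hb ((val_eq_zero b).1 (Nat.eq_zero_of_dvd_of_lt hdvd (val_lt b)))

lemma card_filter_dvd_val_le (p : ℕ) [NeZero p] : #{a : ZMod (p ^ 2) | p ∣ a.val} ≤ p := by
  calc _ ≤ #((range p).image fun i => ((p * i : ℕ) : ZMod (p ^ 2))) := by
        refine card_le_card fun a ha => ?_
        obtain ⟨i, hi⟩ := (mem_filter_univ _).1 ha
        have : p * i < p * p := hi ▸ sq p ▸ val_lt a
        exact mem_image.2 ⟨i, mem_range.2 (Nat.lt_of_mul_lt_mul_left this),
          by rw [← hi, natCast_zmod_val]⟩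
    _ ≤ p := card_image_le.trans (card_range p).le

variable (p : ℕ) [Fact p.Prime] [DecidableRel (annGraph (ZMod (p ^ 2))).Adj]

lemma degree_annGraph_le (a : ZMod (p ^ 2)) :
    (annGraph (ZMod (p ^ 2))).degree a ≤
      (if a = 0 then p ^ 2 else 0) + (if p ∣ a.val then p else 0) + 1 := by
  -- `0` is adjacent to every vertex, a nonzero multiple of `p` only to multiples of `p`,
  -- and any other vertex only to `0`
  rw [← card_neighborFinset_eq_degree]
  by_cases ha : a = 0
  · rw [if_pos ha]
    exact (card_le_univ _).trans ((card (p ^ 2)).trans_le (by omega))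
  by_cases hpa : p ∣ a.val
  · calc _ ≤ #{b : ZMod (p ^ 2) | p ∣ b.val} := card_le_card fun b hb =>
          (mem_filter_univ _).2 (dvd_val_of_annGraph_adj ((mem_neighborFinset _ _ _).1 hb).symm ha)
      _ ≤ _ := by simpa [ha, hpa] using (card_filter_dvd_val_le p).trans p.le_succ
  · calc _ ≤ #({0} : Finset (ZMod (p ^ 2))) := card_le_card fun b hb => by
          by_contra hb0
          exact hpa (dvd_val_of_annGraph_adj ((mem_neighborFinset _ _ _).1 hb)
            (by simpa using hb0))
      _ ≤ _ := by simp [ha, hpa]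

lemma sum_degree_annGraph_le : ∑ a, (annGraph (ZMod (p ^ 2))).degree a ≤ 3 * p ^ 2 := by
  calc _ ≤ ∑ a : ZMod (p ^ 2), ((if a = 0 then p ^ 2 else 0) + (if p ∣ a.val then p else 0) + 1) :=
        sum_le_sum fun a _ => degree_annGraph_le p a
    _ ≤ p ^ 2 + p * p + p ^ 2 := by
        simp only [sum_add_distrib, sum_ite_eq', mem_univ, if_true, sum_ite, sum_const_zero,
          sum_const, smul_eq_mul, card_univ, ZMod.card, add_zero]
        gcongr
        · exact card_filter_dvd_val_le p
        · simp
    _ = 3 * p ^ 2 := by ring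

lemma rank_adjMatrix_annGraph_le : ((annGraph (ZMod (p ^ 2))).adjMatrix ℝ).rank ≤ p + 1 := by
  calc _ ≤ #{b : ZMod (p ^ 2) | p ∣ b.val} + 1 :=
        rank_adjMatrix_le_of_forall_notMem _ _ {0} fun j hj i => by
          have hj0 : j ≠ 0 := by rintro rfl; simp at hj
          refine ⟨fun h => mem_singleton.2 ?_, fun h => mem_singleton.1 h ▸ annGraph_adj_zero hj0⟩
          by_contra hi
          exact hj ((mem_filter_univ _).2 (dvd_val_of_annGraph_adj h.symm hi))
    _ ≤ p + 1 := by gcongr; exact card_filter_dvd_val_le p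

end ZMod

/-- for every prime `p ≥ 7` there is a connected threshold graph `H`
(no alternating 4-cycle) on `p²` vertices with
`E(Γ(ℤ/p²ℤ)) < E(H) < E(K_{p²}) = 2(p² - 1)`. -/
theorem exists_threshold_between (p : ℕ) [Fact p.Prime] (hp7 : 7 ≤ p) :
    ∃ H : SimpleGraph (Fin (p ^ 2)),
      H.Connected ∧
      (¬ ∃ a b c d : Fin (p ^ 2),
          a ≠ b ∧ a ≠ c ∧ a ≠ d ∧ b ≠ c ∧ b ≠ d ∧ c ≠ d ∧
          H.Adj a b ∧ H.Adj c d ∧ ¬ H.Adj a c ∧ ¬ H.Adj b d) ∧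
      graphEnergy (annGraph (ZMod (p ^ 2))) < graphEnergy H ∧
      graphEnergy H < graphEnergy (⊤ : SimpleGraph (Fin (p ^ 2))) ∧
      graphEnergy (⊤ : SimpleGraph (Fin (p ^ 2))) = 2 * ((p : ℝ) ^ 2 - 1) := by
  classical
  have hp : (7 : ℝ) ≤ p := by exact_mod_cast hp7
  have hpp : p ≤ p ^ 2 := Nat.le_self_pow two_ne_zero p
  let H := completeSplitGraph (p ^ 2) p
  have hdegH : ∑ a, (H.degree a : ℝ) = 2 * p ^ 3 - p ^ 2 - p := by
    rw [← Nat.cast_sum, completeSplitGraph.sum_degree hpp]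
    push_cast [hpp, Nat.one_le_iff_ne_zero.2 (NeZero.ne (p ^ 2))]
    ring
  have hdegΓ : ∑ a, ((annGraph (ZMod (p ^ 2))).degree a : ℝ) ≤ 3 * p ^ 2 := by
    exact_mod_cast ZMod.sum_degree_annGraph_le p
  have hΓ : graphEnergy (annGraph (ZMod (p ^ 2))) ^ 2 ≤ (p + 1) * (3 * p ^ 2) :=
    (graphEnergy_sq_le_rank_mul_sum_degree _).trans <| by
      gcongr
      exact_mod_cast ZMod.rank_adjMatrix_annGraph_le p
  have hH_ge : 2 * (2 * p ^ 3 - p ^ 2 - p) ≤ graphEnergy H ^ 2 :=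
    hdegH ▸ two_mul_sum_degree_le_graphEnergy_sq H
  have hH_le : graphEnergy H ^ 2 ≤ (p + 1) * (2 * p ^ 3 - p ^ 2 - p) := by
    rw [← hdegH]
    refine (graphEnergy_sq_le_rank_mul_sum_degree H).trans ?_
    gcongr
    exact_mod_cast completeSplitGraph.rank_adjMatrix_le
  have hK : graphEnergy (⊤ : SimpleGraph (Fin (p ^ 2))) = 2 * ((p : ℝ) ^ 2 - 1) := by
    simp [graphEnergy_top]
  refine ⟨H, completeSplitGraph.connected (by omega),
    completeSplitGraph.not_exists_alternating_four_cycle, ?_, ?_, hK⟩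
  · exact lt_of_pow_lt_pow_left₀ 2 (graphEnergy_nonneg H) (by nlinarith)
  · rw [hK]
    exact lt_of_pow_lt_pow_left₀ 2 (by nlinarith) (by nlinarith)
end

section
/- Let p be a prime and α ≥ 1 an integer. In the group-annihilator graph Γ(ℤ/p^αℤ), the vertex 0 has degree p^α − 1, and for every 0 ≤ i ≤ α−1 and every vertex a ∈ O_{α,p^i}: the degree of a equals p^i if 2i < α, and equals p^i − 1 if 2i ≥ α. -/
section IntCastSurjective

variable {R : Type*} [CommRing R] (hR : Function.Surjective (Int.cast : ℤ → R))
include hR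

theorem mem_annSet_iff {a : R} {x : ℤ} : x ∈ annSet a ↔ ∃ n : ℤ, (x : R) = n * a := by
  refine ⟨fun hx ↦ ?_, fun ⟨n, hn⟩ g ↦ ?_⟩
  · obtain ⟨n, hn⟩ := hx 1
    exact ⟨n, by simpa [zsmul_eq_mul] using hn⟩
  · obtain ⟨m, rfl⟩ := hR g
    exact ⟨n * m, by simp only [zsmul_eq_mul, Int.cast_mul, hn]; ring⟩

theorem annGraph_adj_iff_s18 {a b : R} : (annGraph R).Adj a b ↔ a ≠ b ∧ a * b = 0 := by
  refine and_congr_right fun _ ↦ ⟨fun h ↦ ?_, fun hab x hx y hy g ↦ ?_⟩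
  · obtain ⟨x, rfl⟩ := hR a
    obtain ⟨y, rfl⟩ := hR b
    have self_mem {z : ℤ} : z ∈ annSet (z : R) := (mem_annSet_iff hR).2 ⟨1, by simp⟩
    simpa using h x self_mem y self_mem 1
  · obtain ⟨n, hn⟩ := (mem_annSet_iff hR).1 hx
    obtain ⟨m, hm⟩ := (mem_annSet_iff hR).1 hy
    calc (x * y) • g = n * m * g * (a * b) := by
          simp only [zsmul_eq_mul, Int.cast_mul, hn, hm]; ring
      _ = 0 := by rw [hab, mul_zero]

theorem neighborSet_annGraph (a : R) :
    (annGraph R).neighborSet a = {c | a * c = 0} \ {a} := by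
  ext c
  simp only [SimpleGraph.mem_neighborSet, annGraph_adj_iff_s18 hR, Set.mem_sdiff, Set.mem_ofPred_eq,
    Set.mem_singleton_iff, ne_comm, and_comm]

end IntCastSurjective

theorem ZMod.setOf_natCast_mul_eq_zero {n d : ℕ} [NeZero n] (hd : d ∣ n) :
    {c : ZMod n | (d : ZMod n) * c = 0} = AddSubgroup.zmultiples ((n / d : ℕ) : ZMod n) := by
  obtain ⟨e, rfl⟩ := hd
  have hd : d ≠ 0 := left_ne_zero_of_mul (NeZero.ne (d * e))
  ext c
  obtain ⟨m, rfl⟩ := ZMod.intCast_surjective c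
  rw [Nat.mul_div_cancel_left e (Nat.pos_of_ne_zero hd), Set.mem_ofPred_eq, SetLike.mem_coe,
    AddSubgroup.mem_zmultiples_iff]
  constructor
  · intro h
    have hdvd : ((d * e : ℕ) : ℤ) ∣ d * m :=
      (ZMod.intCast_zmod_eq_zero_iff_dvd _ _).1 (by exact_mod_cast h)
    push_cast at hdvd
    obtain ⟨k, rfl⟩ := (mul_dvd_mul_iff_left (by exact_mod_cast hd)).1 hdvd
    exact ⟨k, by push_cast; rw [zsmul_eq_mul]; ring⟩
  · rintro ⟨k, hk⟩
    rw [← hk, zsmul_eq_mul, mul_left_comm, ← Nat.cast_mul, ZMod.natCast_self, mul_zero]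

theorem ZMod.ncard_setOf_natCast_mul_eq_zero {n d : ℕ} [NeZero n] (hd : d ∣ n) :
    {c : ZMod n | (d : ZMod n) * c = 0}.ncard = d := by
  have hn : n ≠ 0 := NeZero.ne n
  rw [ZMod.setOf_natCast_mul_eq_zero hd, ← Nat.card_coe_set_eq, SetLike.coe_sort_coe,
    Nat.card_zmultiples, ZMod.addOrderOf_coe _ hn, Nat.gcd_eq_right (Nat.div_dvd_of_dvd hd),
    Nat.div_div_self hd hn]

theorem ZMod.natCast_pow_eq_zero_iff {p α k : ℕ} (hp : 1 < p) :
    (p : ZMod (p ^ α)) ^ k = 0 ↔ α ≤ k := by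
  rw [← Nat.cast_pow, ZMod.natCast_eq_zero_iff, Nat.pow_dvd_pow_iff_le_right hp]

theorem exists_isUnit_of_mem_porbit {p α i : ℕ} {a : ZMod (p ^ α)} (ha : a ∈ porbit p α i) :
    ∃ u : ZMod (p ^ α), IsUnit u ∧ a = (p : ZMod (p ^ α)) ^ i * u := by
  obtain ⟨b, hb, rfl⟩ := ha
  have hcop := ((Int.isCoprime_iff_gcd_eq_one.2 hb).pow_right (n := α)).map
    (Int.castRingHom (ZMod (p ^ α)))
  rw [eq_intCast, eq_intCast, Int.cast_pow, Int.cast_natCast, ← Nat.cast_pow, ZMod.natCast_self,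
    isCoprime_zero_right] at hcop
  exact ⟨b, hcop, by push_cast; rfl⟩

theorem ncard_neighborSet_annGraph_pow_mul_unit {p α i : ℕ} (hp : 1 < p) (hi : i ≤ α)
    {u : ZMod (p ^ α)} (hu : IsUnit u) :
    ((annGraph (ZMod (p ^ α))).neighborSet ((p : ZMod (p ^ α)) ^ i * u)).ncard =
      if 2 * i < α then p ^ i else p ^ i - 1 := by
  have : NeZero (p ^ α) := ⟨pow_ne_zero _ (by omega)⟩
  have hann : {c : ZMod (p ^ α) | (p : ZMod (p ^ α)) ^ i * u * c = 0} =
      {c | ((p ^ i : ℕ) : ZMod (p ^ α)) * c = 0} := by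
    ext c
    simp only [Set.mem_ofPred_eq, Nat.cast_pow, mul_right_comm _ u, hu.mul_left_eq_zero]
  have hself : (p : ZMod (p ^ α)) ^ i * u ∈ {c | ((p ^ i : ℕ) : ZMod (p ^ α)) * c = 0} ↔
      α ≤ 2 * i := by
    rw [Set.mem_ofPred_eq, Nat.cast_pow, ← mul_assoc, ← pow_add, hu.mul_left_eq_zero,
      ZMod.natCast_pow_eq_zero_iff hp, two_mul]
  rw [neighborSet_annGraph (ZMod.intCast_surjective), hann]
  have hcard := ZMod.ncard_setOf_natCast_mul_eq_zero (Nat.pow_dvd_pow p hi)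
  split_ifs with h
  · rwa [Set.sdiff_singleton_eq_self (by rw [hself]; omega)]
  · rw [Set.ncard_sdiff_singleton_of_mem (hself.2 (by omega)), hcard]

theorem annGraph_degrees_general (p α : ℕ) (hp : p.Prime) :
    ((annGraph (ZMod (p ^ α))).neighborSet 0).ncard = p ^ α - 1 ∧
    ∀ i, i ≤ α - 1 → ∀ a ∈ porbit p α i,
      ((annGraph (ZMod (p ^ α))).neighborSet a).ncard =
        if 2 * i < α then p ^ i else p ^ i - 1 := by
  refine ⟨?_, fun i hi a ha ↦ ?_⟩
  · have h0 : (p : ZMod (p ^ α)) ^ α * 1 = 0 := by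
      rw [mul_one, ZMod.natCast_pow_eq_zero_iff hp.one_lt]
    have := ncard_neighborSet_annGraph_pow_mul_unit (α := α) hp.one_lt le_rfl isUnit_one
    rwa [h0, if_neg (by omega)] at this
  · obtain ⟨u, hu, rfl⟩ := exists_isUnit_of_mem_porbit ha
    exact ncard_neighborSet_annGraph_pow_mul_unit hp.one_lt (by omega) hu

/-- for a prime `p` and `α ≥ 1`, in `Γ(ℤ/p^αℤ)` the vertex `0` has degree
`p^α - 1`, and for `0 ≤ i ≤ α-1` every vertex `a ∈ O_{α,p^i}` has degree `p^i` if
`2i < α` and degree `p^i - 1` if `2i ≥ α`. -/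
theorem annGraph_degrees (p α : ℕ) (hp : p.Prime) (hα : 1 ≤ α) :
    ((annGraph (ZMod (p ^ α))).neighborSet 0).ncard = p ^ α - 1 ∧
    ∀ i, i ≤ α - 1 → ∀ a ∈ porbit p α i,
      ((annGraph (ZMod (p ^ α))).neighborSet a).ncard =
        if 2 * i < α then p ^ i else p ^ i - 1 :=
  annGraph_degrees_general p α hp
end
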